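/- In the proof system, ⊢ DA^nφ → Dφ for every formula φ and every n ≥ 0, where Aχ abbreviates Rχ ∨ Dχ and A^n is n-fold application of A. -/
import Mathlib


/-- Formulas of the awareness logic: propositional variables, ¬, →, and
modalities K (knows about herself), R (de re aware), D (de dicto aware). -/
inductive Formula : Type
  | var : ℕ → Formula
  | neg : Formula → Formula
  | imp : Formula → Formula → Formula
  | K : Formula → Formula
  | R : Formula → Formula
  | D : Formula → Formula
deriving DecidableEq

/-- Truth constant ⊤, defined in the standard way. -/
def fTop : Formula := (Formula.var 0).imp (Formula.var 0)

/-- False constant ⊥, defined in the standard way. -/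
def fBot : Formula := fTop.neg

/-- Disjunction, defined in the standard way from ¬ and →. -/
def fOr (φ ψ : Formula) : Formula := φ.neg.imp ψ

/-- An epistemic model (W, 𝒜, P, ∼, π): presence relation P ⊆ 𝒜 × W,
indistinguishability ∼ₐ an equivalence relation on Pₐ = {w | a P w},
and π(p) ⊆ P. -/
structure EpistemicModel where
  W : Type
  A : Type
  P : A → W → Prop
  indist : A → W → W → Prop
  indist_left : ∀ a w u, indist a w u → P a w
  indist_right : ∀ a w u, indist a w u → P a u
  indist_refl : ∀ a w, P a w → indist a w w
  indist_symm : ∀ a w u, indist a w u → indist a u w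
  indist_trans : ∀ a w u v, indist a w u → indist a u v → indist a w v
  pi : ℕ → A → W → Prop
  pi_sub : ∀ p a w, pi p a w → P a w

/-- The satisfaction relation w,a ⊨ φ. -/
def Sat (M : EpistemicModel) : Formula → M.W → M.A → Prop
  | .var p, w, a => M.pi p a w
  | .neg φ, w, a => ¬ Sat M φ w a
  | .imp φ ψ, w, a => Sat M φ w a → Sat M ψ w a
  | .K φ, w, a => ∀ u, M.P a u → M.indist a w u → Sat M φ u a
  | .R φ, w, a => ∃ b, M.P b w ∧ Sat M φ w b ∧
      (∀ u, M.P a u → M.indist a w u → M.P b u)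
  | .D φ, w, a => ∀ u, M.P a u → M.indist a w u →
      ∃ b, M.P b u ∧ Sat M φ u b

/-- Validity: true at every world-agent pair (with the agent present)
of every epistemic model. -/
def Valid (φ : Formula) : Prop :=
  ∀ (M : EpistemicModel) (w : M.W) (a : M.A), M.P a w → Sat M φ w a

/-- Propositional tautology: true under every boolean valuation of formulas
that respects ¬ and →. -/
def IsTaut (φ : Formula) : Prop :=
  ∀ v : Formula → Bool,
    (∀ ψ, v ψ.neg = !(v ψ)) →
    (∀ ψ χ, v (ψ.imp χ) = (!(v ψ) || v χ)) →
    v φ = true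

/-- Theorems of the awareness proof system. -/
inductive Thm : Formula → Prop
  | taut {φ : Formula} : IsTaut φ → Thm φ
  | truth (φ : Formula) : Thm ((Formula.K φ).imp φ)
  | negIntro (φ : Formula) : Thm ((Formula.K φ).neg.imp (Formula.K (Formula.K φ).neg))
  | distr (φ ψ : Formula) : Thm ((Formula.K (φ.imp ψ)).imp ((Formula.K φ).imp (Formula.K ψ)))
  | selfAwareR (φ : Formula) : Thm (φ.imp (Formula.R φ))
  | selfAwareD (φ : Formula) : Thm ((Formula.K φ).imp (Formula.D φ))
  | introAware (φ : Formula) : Thm ((Formula.D φ).imp (Formula.K (Formula.D φ)))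
  | unawareR : Thm (Formula.R fBot).neg
  | unawareD : Thm (Formula.D fBot).neg
  | disjunct (φ ψ : Formula) : Thm ((Formula.R (fOr φ ψ)).imp (fOr (Formula.R φ) (Formula.R ψ)))
  | genAware (φ : Formula) : Thm ((Formula.D (fOr (Formula.R φ) (Formula.D φ))).imp (Formula.D φ))
  | mp {φ ψ : Formula} : Thm (φ.imp ψ) → Thm φ → Thm ψ
  | nec {φ : Formula} : Thm φ → Thm (Formula.K φ)
  | monoD {φ ψ : Formula} : Thm (φ.imp ψ) → Thm ((Formula.D φ).imp (Formula.D ψ))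
  | monoR {φ ψ : Formula} : Thm (φ.imp ψ) → Thm ((Formula.R φ).imp (Formula.R ψ))

/-- X ⊢ φ: derivable from theorems and X using only Modus Ponens. -/
inductive Deriv (X : Set Formula) : Formula → Prop
  | thm {φ : Formula} : Thm φ → Deriv X φ
  | hyp {φ : Formula} : φ ∈ X → Deriv X φ
  | mp {φ ψ : Formula} : Deriv X (φ.imp ψ) → Deriv X φ → Deriv X ψ

/-- X is consistent if X ⊬ ⊥. -/
def Consistent (X : Set Formula) : Prop := ¬ Deriv X fBot

/-- Maximal consistent set. -/
def MaxConsistent (X : Set Formula) : Prop :=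
  Consistent X ∧ ∀ φ : Formula, φ ∈ X ∨ φ.neg ∈ X

/-- General awareness modality Aχ := Rχ ∨ Dχ. -/
def fA (φ : Formula) : Formula := fOr (Formula.R φ) (Formula.D φ)

/-- n-fold application of A. -/
def fAn : ℕ → Formula → Formula
  | 0, φ => φ
  | n + 1, φ => fA (fAn n φ)

/-- X is λ-assured if X ⊬ Aⁿ¬λ for every n ≥ 0. -/
def Assured (l : Formula) (X : Set Formula) : Prop :=
  ∀ n : ℕ, ¬ Deriv X (fAn n l.neg)

theorem thm_trans {α β γ : Formula} (h1 : Thm (α.imp β)) (h2 : Thm (β.imp γ)) :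
    Thm (α.imp γ) := by
  have t : IsTaut ((α.imp β).imp ((β.imp γ).imp (α.imp γ))) := by
    intro v hn hi
    simp only [hi]
    cases v α <;> cases v β <;> cases v γ <;> rfl
  exact ((Thm.taut t).mp h1).mp h2

theorem D_An_imp_D (φ : Formula) (n : ℕ) :
    Thm ((Formula.D (fAn n φ)).imp (Formula.D φ)) := by
  induction n with
  | zero =>
      apply Thm.taut
      intro v hn hi
      show v ((Formula.D φ).imp (Formula.D φ)) = true
      simp [hi]
  | succ n ih =>
      exact thm_trans (Thm.genAware (fAn n φ)) ih
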